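/- Fix ρ ≥ 1. Define Θ(η,θ) = η·(2(θ-1)² - (θ+1)θ(3η+2)ρ² - (θ+1)ηρ²) / (2ρ·((1+θ)²η²ρ² + 1)). Then there exist η > 0 and θ ∈ (0,1) such that Θ(η,θ) ∈ (0,1). -/

import Mathlib

/-! Since the numerator is below `2η` and the denominator at least `2ρ`, `Θ(η, θ) < η / ρ`, so
any `η ≤ ρ` gives `Θ < 1`. Taking `η = θ = 1 / (8ρ²)` makes the subtracted terms of the numerator,
which scale like `θρ²` and `ηρ²`, small compared with `2(1 - θ)²`, so `Θ > 0`. -/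

open Set

noncomputable def fedlContraction (ρ η θ : ℝ) : ℝ :=
  η * (2 * (θ - 1) ^ 2 - (θ + 1) * θ * (3 * η + 2) * ρ ^ 2 - (θ + 1) * η * ρ ^ 2) /
    (2 * ρ * ((1 + θ) ^ 2 * η ^ 2 * ρ ^ 2 + 1))

section

variable {ρ η θ : ℝ}

theorem fedlContraction_lt_div (hρ : 0 < ρ) (hη : 0 < η) (hθ : θ ∈ Icc (0 : ℝ) 1) :
    fedlContraction ρ η θ < η / ρ := by
  obtain ⟨hθ0, hθ1⟩ := hθ
  have hnum : η * (2 * (θ - 1) ^ 2 - (θ + 1) * θ * (3 * η + 2) * ρ ^ 2 - (θ + 1) * η * ρ ^ 2)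
      < 2 * η := by
    have : 0 < (θ + 1) * η * ρ ^ 2 := by positivity
    have : 0 ≤ (θ + 1) * θ * (3 * η + 2) * ρ ^ 2 := by positivity
    have : (θ - 1) ^ 2 ≤ 1 := by nlinarith
    nlinarith
  have hden : 2 * ρ ≤ 2 * ρ * ((1 + θ) ^ 2 * η ^ 2 * ρ ^ 2 + 1) :=
    le_mul_of_one_le_right (by positivity) (le_add_of_nonneg_left (by positivity))
  calc fedlContraction ρ η θ < 2 * η / (2 * ρ * ((1 + θ) ^ 2 * η ^ 2 * ρ ^ 2 + 1)) :=
        div_lt_div_of_pos_right hnum (by positivity)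
    _ ≤ 2 * η / (2 * ρ) := div_le_div_of_nonneg_left (by positivity) (by positivity) hden
    _ = η / ρ := mul_div_mul_left η ρ two_ne_zero

theorem fedlContraction_pos (hρ : 0 < ρ) (hη : 0 < η) (hθ : 0 ≤ θ) (hη' : η ≤ 1 / 8)
    (hθ' : θ ≤ 1 / 8) (hηρ : η * ρ ^ 2 ≤ 1 / 8) (hθρ : θ * ρ ^ 2 ≤ 1 / 8) :
    0 < fedlContraction ρ η θ := by
  refine div_pos (mul_pos hη ?_) (by positivity)
  -- each subtracted term is at most a fixed fraction of `2 (1 - θ)² ≥ 2 (7/8)²`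
  have h1 : (θ + 1) * θ * (3 * η + 2) * ρ ^ 2 ≤ 9 / 8 * (19 / 8) * (1 / 8) := by
    calc (θ + 1) * θ * (3 * η + 2) * ρ ^ 2 = (θ + 1) * (3 * η + 2) * (θ * ρ ^ 2) := by ring
      _ ≤ 9 / 8 * (19 / 8) * (1 / 8) := by gcongr <;> linarith
  have h2 : (θ + 1) * η * ρ ^ 2 ≤ 9 / 8 * (1 / 8) := by
    calc (θ + 1) * η * ρ ^ 2 = (θ + 1) * (η * ρ ^ 2) := by ring
      _ ≤ 9 / 8 * (1 / 8) := by gcongr; linarith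
  nlinarith

end

/-- For any condition number ρ ≥ 1, there exist η > 0 and θ ∈ (0,1) such that the
FEDL contraction factor Θ(η,θ) lies in (0,1). -/
theorem stmt_5 (ρ : ℝ) (hρ : 1 ≤ ρ) :
    ∃ η : ℝ, 0 < η ∧ ∃ θ : ℝ, θ ∈ Set.Ioo (0 : ℝ) 1 ∧
      (η * (2 * (θ - 1) ^ 2 - (θ + 1) * θ * (3 * η + 2) * ρ ^ 2 - (θ + 1) * η * ρ ^ 2) /
        (2 * ρ * ((1 + θ) ^ 2 * η ^ 2 * ρ ^ 2 + 1))) ∈ Set.Ioo (0 : ℝ) 1 := by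
  have hρ0 : 0 < ρ := by linarith
  set ε := 1 / (8 * ρ ^ 2) with hε
  have hε0 : 0 < ε := by positivity
  have hερ : ε * ρ ^ 2 = 1 / 8 := by rw [hε]; field_simp
  have hε8 : ε ≤ 1 / 8 := by nlinarith [one_le_pow₀ (n := 2) hρ]
  refine ⟨ε, hε0, ε, ⟨hε0, by linarith⟩, fedlContraction_pos hρ0 hε0 hε0.le hε8 hε8 hερ.le hερ.le, ?_⟩
  calc fedlContraction ρ ε ε < ε / ρ := fedlContraction_lt_div hρ0 hε0 ⟨hε0.le, by linarith⟩
    _ ≤ 1 := (div_le_one hρ0).2 (by linarith)
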